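/- If R₀ > 1, then there exists a unique Q* ∈ (0,1) satisfying F(Q*) = 0; i.e., the fixed point problem Q = Q ∬_Ω k(x,s) e^{-Q Λ(x,s)} d(s,x) has exactly one non-trivial solution in (0,1). -/

import Mathlib

/-!
Write `G(Q) = 1 - F(Q) = ∬_Ω k e^{-QΛ}`. Since `Λ ≥ 0` on `Ω` and `Λ > 0` in its interior, `G`
is continuous and strictly decreasing, with `G(0) = R₀ > 1`. At `Q = 1`, bounding
`e^{-γ(x-s)} ≤ 1` leaves the inner integral `∫₀^x θ(s) e^{-Λ(x,s)} ds = 1 - e^{-Λ(x,0)}`, an exact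
derivative, so `G(1) ≤ 1 - e^{-Λ(A,0)} < 1` by the normalisation of `p`. The intermediate value
theorem gives a unique zero of `F` in `(0,1)`, and for `Q ≠ 0` the fixed-point equation is `F(Q) = 0`.
-/

open MeasureTheory Real Set Filter

/-- `Λ(x,s) = ∫_s^x θ(t) dt`. -/
noncomputable def Lam (θ : ℝ → ℝ) (x s : ℝ) : ℝ := ∫ t in s..x, θ t

/-- `w(x;Q) = Q e^{-γx} ∫₀^x e^{γs} θ(s) e^{-Q Λ(x,s)} ds`. -/
noncomputable def w (γ : ℝ) (θ : ℝ → ℝ) (Q x : ℝ) : ℝ :=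
  Q * Real.exp (-γ * x) * ∫ s in (0:ℝ)..x, Real.exp (γ * s) * θ s * Real.exp (-Q * Lam θ x s)
/-- The kernel `k(x,s) = (p(x)/N)·θ(s)·e^{-γ(x-s)}`. -/
noncomputable def kker (γ N : ℝ) (p θ : ℝ → ℝ) (x s : ℝ) : ℝ :=
  (p x / N) * θ s * Real.exp (-γ * (x - s))

/-- The triangle `Ω = {(x,s) : 0 ≤ s ≤ x ≤ A}` (first coordinate `x`, second `s`). -/
def Tri (A : ℝ) : Set (ℝ × ℝ) := {q | 0 ≤ q.2 ∧ q.2 ≤ q.1 ∧ q.1 ≤ A}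

/-- Basic reproductive number `R₀ = ∬_Ω k(x,s) d(s,x)`. -/
noncomputable def R0 (γ N A : ℝ) (p θ : ℝ → ℝ) : ℝ :=
  ∫ q in Tri A, kker γ N p θ q.1 q.2

/-- `F(Q) = 1 - ∬_Ω k(x,s) e^{-Q Λ(x,s)} d(s,x)`. -/
noncomputable def FF (γ N A : ℝ) (p θ : ℝ → ℝ) (Q : ℝ) : ℝ :=
  1 - ∫ q in Tri A, kker γ N p θ q.1 q.2 * Real.exp (-Q * Lam θ q.1 q.2)

/-- Iteration map `T(Q) = Q·(1 - F(Q))`. -/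
noncomputable def TT (γ N A : ℝ) (p θ : ℝ → ℝ) (Q : ℝ) : ℝ :=
  Q * (1 - FF γ N A p θ Q)

lemma ContinuousOn.exists_continuous_pos_eqOn_Icc {α : Type*} [LinearOrder α]
    [TopologicalSpace α] [OrderTopology α] {a b : α} (hab : a ≤ b) {f : α → ℝ}
    (hf : ContinuousOn f (Icc a b)) (hpos : ∀ x ∈ Icc a b, 0 < f x) :
    ∃ g : α → ℝ, Continuous g ∧ (∀ x, 0 < g x) ∧ EqOn g f (Icc a b) :=
  ⟨IccExtend hab ((Icc a b).domRestrict f), continuous_IccExtend_iff.2 hf.domRestrict,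
    fun x => hpos _ (projIcc a b hab x).2, fun _ hx => IccExtend_of_mem hab _ hx⟩

lemma Continuous.setIntegral_pos_of_nonneg_of_mem_interior {X : Type*} [TopologicalSpace X]
    [MeasurableSpace X] [OpensMeasurableSpace X] {μ : Measure X} [μ.IsOpenPosMeasure]
    {f : X → ℝ} {s : Set X} (hf : Continuous f) (hfi : IntegrableOn f s μ) (hs : MeasurableSet s)
    (hnonneg : ∀ y ∈ s, 0 ≤ f y) {x : X} (hx : x ∈ interior s) (hfx : 0 < f x) :
    0 < ∫ y in s, f y ∂μ := by
  refine (setIntegral_pos_iff_support_of_nonneg_ae (ae_restrict_of_forall_mem hs hnonneg) hfi).2 ?_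
  calc 0 < μ (Function.support f ∩ interior s) :=
        (hf.isOpen_support.inter isOpen_interior).measure_pos μ ⟨x, hfx.ne', hx⟩
    _ ≤ μ (Function.support f ∩ s) := measure_mono (inter_subset_inter_right _ interior_subset)

lemma StrictMono.existsUnique_mem_Ioo_eq_zero {a b : ℝ} {f : ℝ → ℝ} (hmono : StrictMono f)
    (hf : ContinuousOn f (Icc a b)) (ha : f a < 0) (hb : 0 < f b) :
    ∃! x : ℝ, x ∈ Ioo a b ∧ f x = 0 := by
  obtain ⟨x, hx, hfx⟩ :=
    intermediate_value_Ioo (hmono.lt_iff_lt.1 (ha.trans hb)).le hf ⟨ha, hb⟩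
  exact ⟨x, ⟨hx, hfx⟩, fun y hy => hmono.injective (hy.2.trans hfx.symm)⟩

section Triangle

variable {A : ℝ}

lemma isClosed_tri (A : ℝ) : IsClosed (Tri A) :=
  (isClosed_le continuous_const continuous_snd).inter
    ((isClosed_le continuous_snd continuous_fst).inter (isClosed_le continuous_fst continuous_const))

lemma tri_subset_Icc_prod_Icc (A : ℝ) : Tri A ⊆ Icc 0 A ×ˢ Icc 0 A :=
  fun _ ⟨h0, hsx, hxA⟩ => ⟨⟨h0.trans hsx, hxA⟩, ⟨h0, hsx.trans hxA⟩⟩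

lemma isCompact_tri (A : ℝ) : IsCompact (Tri A) :=
  (isCompact_Icc.prod isCompact_Icc).of_isClosed_subset (isClosed_tri A)
    (tri_subset_Icc_prod_Icc A)

lemma measurableSet_tri (A : ℝ) : MeasurableSet (Tri A) := (isClosed_tri A).measurableSet

lemma mem_interior_tri {x s : ℝ} (h0 : 0 < s) (hsx : s < x) (hxA : x < A) :
    (x, s) ∈ interior (Tri A) := by
  refine interior_maximal (t := {q : ℝ × ℝ | 0 < q.2 ∧ q.2 < q.1 ∧ q.1 < A})
    (fun _ ⟨h0, hsx, hxA⟩ => show _ ∧ _ ∧ _ from ⟨h0.le, hsx.le, hxA.le⟩) ?_ ⟨h0, hsx, hxA⟩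
  exact (isOpen_lt continuous_const continuous_snd).inter
    ((isOpen_lt continuous_snd continuous_fst).inter (isOpen_lt continuous_fst continuous_const))

lemma setIntegral_tri_eq_integral_integral (hA : 0 ≤ A) {f : ℝ × ℝ → ℝ}
    (hf : IntegrableOn f (Tri A)) :
    ∫ q in Tri A, f q = ∫ x in (0 : ℝ)..A, ∫ s in (0 : ℝ)..x, f (x, s) := by
  have hslice : ∀ x, ∫ s, (Tri A).indicator f (x, s)
      = (Icc 0 A).indicator (fun x => ∫ s in (0 : ℝ)..x, f (x, s)) x := by
    intro x
    by_cases hx : x ∈ Icc 0 A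
    · have : ∀ s, (Tri A).indicator f (x, s) = (Icc 0 x).indicator (fun s => f (x, s)) s :=
        fun s => by simp only [indicator, Tri, mem_Icc, mem_ofPred_eq, hx.2, and_true]
      simp_rw [indicator_of_mem hx, this, integral_indicator measurableSet_Icc,
        intervalIntegral.integral_of_le hx.1, integral_Icc_eq_integral_Ioc]
    · have : ∀ s, (Tri A).indicator f (x, s) = 0 :=
        fun s => indicator_of_notMem (fun h => hx (tri_subset_Icc_prod_Icc A h).1) _
      simp_rw [indicator_of_notMem hx, this, integral_zero]
  have hprod : Integrable ((Tri A).indicator f) (volume.prod volume) := by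
    rw [← Measure.volume_eq_prod]
    exact (integrable_indicator_iff (measurableSet_tri A)).2 hf
  rw [← integral_indicator (measurableSet_tri A), Measure.volume_eq_prod, integral_prod _ hprod]
  simp_rw [hslice, integral_indicator measurableSet_Icc, intervalIntegral.integral_of_le hA,
    integral_Icc_eq_integral_Ioc]

end Triangle

section Lam

variable {θ : ℝ → ℝ}

lemma Lam_eq_sub (hθ : Continuous θ) (x s : ℝ) :
    Lam θ x s = (∫ t in (0 : ℝ)..x, θ t) - ∫ t in (0 : ℝ)..s, θ t :=
  (intervalIntegral.integral_interval_sub_left (hθ.intervalIntegrable _ _)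
    (hθ.intervalIntegrable _ _)).symm

lemma continuous_Lam (hθ : Continuous θ) : Continuous fun q : ℝ × ℝ => Lam θ q.1 q.2 := by
  have hprim := intervalIntegral.continuous_primitive (μ := volume)
    (fun a b => hθ.intervalIntegrable a b) 0
  simp_rw [Lam_eq_sub hθ]
  exact (hprim.comp continuous_fst).sub (hprim.comp continuous_snd)

lemma Lam_nonneg (hθ : ∀ t, 0 ≤ θ t) {x s : ℝ} (hsx : s ≤ x) : 0 ≤ Lam θ x s :=
  intervalIntegral.integral_nonneg hsx fun t _ => hθ t

lemma Lam_pos (hθ : Continuous θ) (hθpos : ∀ t, 0 < θ t) {x s : ℝ} (hsx : s < x) :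
    0 < Lam θ x s :=
  intervalIntegral.intervalIntegral_pos_of_pos_on (hθ.intervalIntegrable _ _)
    (fun t _ => hθpos t) hsx

lemma Lam_le_Lam (hθ : Continuous θ) (hθnonneg : ∀ t, 0 ≤ θ t) {x y s : ℝ} (hxy : x ≤ y) :
    Lam θ x s ≤ Lam θ y s := by
  rw [Lam_eq_sub hθ x, Lam_eq_sub hθ y, sub_le_sub_iff_right, ← sub_nonneg,
    intervalIntegral.integral_interval_sub_left (hθ.intervalIntegrable _ _)
      (hθ.intervalIntegrable _ _)]
  exact Lam_nonneg hθnonneg hxy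

lemma integral_mul_exp_neg_Lam (hθ : Continuous θ) (x : ℝ) :
    ∫ s in (0 : ℝ)..x, θ s * exp (-Lam θ x s) = 1 - exp (-Lam θ x 0) := by
  have hderiv : ∀ s, HasDerivAt (fun u => exp (-Lam θ x u)) (θ s * exp (-Lam θ x s)) s := by
    intro s
    have := (intervalIntegral.integral_hasDerivAt_left (hθ.intervalIntegrable s x)
      (hθ.stronglyMeasurableAtFilter _ _) hθ.continuousAt).neg.exp
    simpa [Lam, mul_comm] using this
  rw [intervalIntegral.integral_eq_sub_of_hasDerivAt (fun s _ => hderiv s)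
    ((hθ.mul (continuous_Lam hθ |>.comp (continuous_const.prodMk continuous_id)).neg.rexp
      ).intervalIntegrable _ _)]
  simp [Lam]

end Lam

section Kernel

variable {γ N A : ℝ} {p θ : ℝ → ℝ}

lemma kker_pos (hN : 0 < N) (hp : ∀ x, 0 < p x) (hθ : ∀ t, 0 < θ t) (x s : ℝ) :
    0 < kker γ N p θ x s := by
  have := hp x
  have := hθ s
  unfold kker
  positivity

lemma kker_le (hγ : 0 ≤ γ) (hN : 0 ≤ N) {x s : ℝ} (hpx : 0 ≤ p x) (hθs : 0 ≤ θ s)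
    (hsx : s ≤ x) : kker γ N p θ x s ≤ p x / N * θ s :=
  mul_le_of_le_one_right (by positivity) (exp_le_one_iff.2 (by nlinarith))

lemma continuous_kker_mul_exp_uncurry (hp : Continuous p) (hθ : Continuous θ) :
    Continuous (Function.uncurry fun (Q : ℝ) (q : ℝ × ℝ) =>
      kker γ N p θ q.1 q.2 * exp (-Q * Lam θ q.1 q.2)) := by
  have hLam := (continuous_Lam hθ).comp (continuous_snd (X := ℝ) (Y := ℝ × ℝ))
  unfold kker
  exact ((((hp.comp (continuous_fst.comp continuous_snd)).div_const N).mul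
    (hθ.comp (continuous_snd.comp continuous_snd))).mul
      (continuous_const.mul ((continuous_fst.comp continuous_snd).sub
        (continuous_snd.comp continuous_snd))).rexp).mul (continuous_fst.neg.mul hLam).rexp

lemma continuous_kker_mul_exp (hp : Continuous p) (hθ : Continuous θ) (Q : ℝ) :
    Continuous fun q : ℝ × ℝ => kker γ N p θ q.1 q.2 * exp (-Q * Lam θ q.1 q.2) :=
  (continuous_kker_mul_exp_uncurry hp hθ).comp (continuous_const.prodMk continuous_id)

lemma integrableOn_kker_mul_exp (hp : Continuous p) (hθ : Continuous θ) (Q : ℝ) :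
    IntegrableOn (fun q : ℝ × ℝ => kker γ N p θ q.1 q.2 * exp (-Q * Lam θ q.1 q.2)) (Tri A) :=
  (continuous_kker_mul_exp hp hθ Q).continuousOn.integrableOn_compact (isCompact_tri A)

lemma FF_zero : FF γ N A p θ 0 = 1 - R0 γ N A p θ := by
  simp [FF, R0]

lemma FF_congr {p' θ' : ℝ → ℝ} (hp : EqOn p' p (Icc 0 A)) (hθ : EqOn θ' θ (Icc 0 A)) :
    FF γ N A p' θ' = FF γ N A p θ := by
  funext Q
  refine congrArg (1 - ·) (setIntegral_congr_fun (measurableSet_tri A) fun q hq => ?_)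
  obtain ⟨hx, hs⟩ := tri_subset_Icc_prod_Icc A hq
  have hLam : Lam θ' q.1 q.2 = Lam θ q.1 q.2 := intervalIntegral.integral_congr <| by
    rw [uIcc_of_le hq.2.1]
    exact hθ.mono (Icc_subset_Icc hs.1 hx.2)
  simp only [kker, hp hx, hθ hs, hLam]

lemma continuous_FF (hp : Continuous p) (hθ : Continuous θ) : Continuous (FF γ N A p θ) :=
  continuous_const.sub <|
    continuous_parametric_integral_of_continuous (continuous_kker_mul_exp_uncurry hp hθ)
      (isCompact_tri A)

lemma FF_strictMono (hA : 0 < A) (hN : 0 < N) (hp : Continuous p) (hppos : ∀ x, 0 < p x)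
    (hθ : Continuous θ) (hθpos : ∀ t, 0 < θ t) : StrictMono (FF γ N A p θ) := by
  intro Q₁ Q₂ hQ
  have hgap : 0 < ∫ q in Tri A, (kker γ N p θ q.1 q.2 * exp (-Q₁ * Lam θ q.1 q.2)
      - kker γ N p θ q.1 q.2 * exp (-Q₂ * Lam θ q.1 q.2)) := by
    refine ((continuous_kker_mul_exp hp hθ Q₁).sub (continuous_kker_mul_exp hp hθ Q₂)
      ).setIntegral_pos_of_nonneg_of_mem_interior
      ((integrableOn_kker_mul_exp hp hθ Q₁).sub (integrableOn_kker_mul_exp hp hθ Q₂))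
      (measurableSet_tri A) (fun q hq => ?_) (mem_interior_tri (x := 2 * A / 3) (s := A / 3)
        (by positivity) (by linarith) (by linarith)) ?_
    · have := Lam_nonneg (fun t => (hθpos t).le) hq.2.1
      exact sub_nonneg.2 <| mul_le_mul_of_nonneg_left (exp_le_exp.2 (by nlinarith))
        (kker_pos hN hppos hθpos _ _).le
    · have := Lam_pos hθ hθpos (x := 2 * A / 3) (s := A / 3) (by linarith)
      exact sub_pos.2 <| mul_lt_mul_of_pos_left (exp_lt_exp.2 (by nlinarith))
        (kker_pos hN hppos hθpos _ _)
  rw [integral_sub (integrableOn_kker_mul_exp hp hθ Q₁) (integrableOn_kker_mul_exp hp hθ Q₂)]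
    at hgap
  unfold FF
  linarith

end Kernel

lemma FF_one_pos {γ N A : ℝ} {p θ : ℝ → ℝ} (hγ : 0 ≤ γ) (hA : 0 ≤ A) (hN : 0 ≤ N)
    (hp : Continuous p) (hpnonneg : ∀ x, 0 ≤ p x) (hθ : Continuous θ) (hθnonneg : ∀ t, 0 ≤ θ t)
    (hnorm : (1 / N) * ∫ x in (0 : ℝ)..A, p x = 1) : 0 < FF γ N A p θ 1 := by
  set c := exp (-Lam θ A 0)
  have hmajorant : Continuous fun q : ℝ × ℝ => p q.1 / N * (θ q.2 * exp (-Lam θ q.1 q.2)) :=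
    ((hp.comp continuous_fst).div_const N).mul
      ((hθ.comp continuous_snd).mul (continuous_Lam hθ).neg.rexp)
  have hslice : ∀ x, ∫ s in (0 : ℝ)..x, p x / N * (θ s * exp (-Lam θ x s))
      = p x / N * (1 - exp (-Lam θ x 0)) := fun x => by
    rw [intervalIntegral.integral_const_mul, integral_mul_exp_neg_Lam hθ]
  have hmass : ∫ x in (0 : ℝ)..A, p x / N = 1 := by
    rw [intervalIntegral.integral_div, ← hnorm, one_div_mul_eq_div]
  have hLam0 : Continuous fun x => Lam θ x 0 :=
    (continuous_Lam hθ).comp (continuous_id.prodMk continuous_const)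
  suffices 1 - FF γ N A p θ 1 ≤ 1 - c by linarith [exp_pos (-Lam θ A 0)]
  calc 1 - FF γ N A p θ 1
      = ∫ q in Tri A, kker γ N p θ q.1 q.2 * exp (-1 * Lam θ q.1 q.2) := sub_sub_cancel _ _
    _ ≤ ∫ q in Tri A, p q.1 / N * (θ q.2 * exp (-Lam θ q.1 q.2)) := by
        refine setIntegral_mono_on (integrableOn_kker_mul_exp hp hθ 1)
          (hmajorant.continuousOn.integrableOn_compact (isCompact_tri A))
          (measurableSet_tri A) fun q hq => ?_
        rw [neg_one_mul, ← mul_assoc]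
        exact mul_le_mul_of_nonneg_right
          (kker_le hγ hN (hpnonneg _) (hθnonneg _) hq.2.1) (exp_pos _).le
    _ = ∫ x in (0 : ℝ)..A, p x / N * (1 - exp (-Lam θ x 0)) := by
        rw [setIntegral_tri_eq_integral_integral hA
          (hmajorant.continuousOn.integrableOn_compact (isCompact_tri A))]
        simp only [hslice]
    _ ≤ ∫ x in (0 : ℝ)..A, p x / N * (1 - c) := by
        refine intervalIntegral.integral_mono_on hA
          (((hp.div_const N).mul (continuous_const.sub hLam0.neg.rexp)).intervalIntegrable _ _)
          (((hp.div_const N).mul continuous_const).intervalIntegrable _ _) fun x hx => ?_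
        refine mul_le_mul_of_nonneg_left (sub_le_sub_left (exp_le_exp.2 ?_) 1)
          (div_nonneg (hpnonneg x) hN)
        exact neg_le_neg (Lam_le_Lam hθ hθnonneg hx.2)
    _ = 1 - c := by rw [intervalIntegral.integral_mul_const, hmass, one_mul]

/-- if `R₀ > 1` there is a unique `Q* ∈ (0,1)` with `F(Q*) = 0`,
i.e. a unique non-trivial solution of the fixed point problem in `(0,1)`. -/
theorem endemic_equilibrium_exists (γ A N : ℝ) (hγ : 0 < γ) (hA : 0 < A) (hN : 0 < N)
    (θ p : ℝ → ℝ)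
    (hθc : ContinuousOn θ (Set.Icc 0 A)) (hθpos : ∀ x ∈ Set.Icc 0 A, 0 < θ x)
    (hpc : ContinuousOn p (Set.Icc 0 A)) (hppos : ∀ x ∈ Set.Icc 0 A, 0 < p x)
    (hnorm : (1/N) * ∫ x in (0:ℝ)..A, p x = 1)
    (hR0 : 1 < R0 γ N A p θ) :
    (∃! Q : ℝ, Q ∈ Set.Ioo (0:ℝ) 1 ∧ FF γ N A p θ Q = 0) ∧
    (∃! Q : ℝ, Q ∈ Set.Ioo (0:ℝ) 1 ∧
      Q = Q * ∫ q in Tri A, kker γ N p θ q.1 q.2 * Real.exp (-Q * Lam θ q.1 q.2)) := by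
  -- `F` only sees `θ` and `p` on `[0, A]`, so they may be replaced by continuous positive extensions.
  obtain ⟨θ', hθ', hθ'pos, hθθ'⟩ := hθc.exists_continuous_pos_eqOn_Icc hA.le hθpos
  obtain ⟨p', hp', hp'pos, hpp'⟩ := hpc.exists_continuous_pos_eqOn_Icc hA.le hppos
  have hFF : FF γ N A p θ = FF γ N A p' θ' := (FF_congr hpp' hθθ').symm
  have hnorm' : (1 / N) * ∫ x in (0 : ℝ)..A, p' x = 1 := by
    rwa [intervalIntegral.integral_congr (hpp'.mono (uIcc_of_le hA.le).subset)]
  have hzero : ∃! Q : ℝ, Q ∈ Ioo (0 : ℝ) 1 ∧ FF γ N A p θ Q = 0 := by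
    rw [hFF]
    refine (FF_strictMono hA hN hp' hp'pos hθ' hθ'pos).existsUnique_mem_Ioo_eq_zero
      (continuous_FF hp' hθ').continuousOn ?_
      (FF_one_pos hγ.le hA.le hN.le hp' (fun x => (hp'pos x).le) hθ' (fun t => (hθ'pos t).le)
        hnorm')
    rw [← hFF, FF_zero]
    linarith
  refine ⟨hzero, (existsUnique_congr fun Q => and_congr_right fun hQ => ?_).2 hzero⟩
  rw [FF, sub_eq_zero, eq_comm, mul_eq_left₀ hQ.1.ne', eq_comm]
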